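/- (Lemma 3, joint time–frequency offset form of the quadratic form.) Let L ≥ 1 and D ≥ 0 be integers, set P = L + D, let p ∈ ℂ^L, for t ∈ {0, …, D} let p(t) ∈ ℂ^P have entries p(t)_k = p_{k−t} for t < k ≤ t + L and 0 otherwise, and for ω ∈ ℝ let p(t, ω) = diag(τ(ω)) p(t) where τ(ω) = (e^{i(ℓ−1)ω})_{ℓ=1}^{P}. Let F = F_P be the P-dimensional DFT matrix and Ξ = (F^H Ψ(X)) ⊙ (F Ψ(p(0)^* p(0)^T)) for a Hermitian X ∈ ℂ^{P×P}. Then for every t ∈ {0, …, D} and every ω ∈ ℝ: p(t, ω)^H X p(t, ω) = (2/P) · Re( Σ_{ℓ=1}^{P} (F Ξ)_{t+1, ℓ} · e^{i(ℓ−1)ω} ). -/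
import Mathlib


open Matrix

/-- The `k`-th super-diagonal vector `ψ_k(B)` (0-based `k`): entry `ℓ` equals
`c_k · B_{ℓ, ℓ+k}` when `ℓ + k < K` and `0` otherwise, where `c_0 = √2/2` and `c_k = 1`
for `k ≥ 1` (this matches the paper's 1-based `ψ_{k+1}`). -/
noncomputable def psi (K : ℕ) (k : Fin K) (B : Matrix (Fin K) (Fin K) ℂ) : Fin K → ℂ :=
  fun ℓ =>
    if h : (ℓ : ℕ) + (k : ℕ) < K then
      (if (k : ℕ) = 0 then ((Real.sqrt 2 / 2 : ℝ) : ℂ) else 1) * B ℓ ⟨(ℓ : ℕ) + (k : ℕ), h⟩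
    else 0

/-- `Ψ(B)`: the matrix whose `k`-th column is `ψ_k(B)`. -/
noncomputable def bigPsi (K : ℕ) (B : Matrix (Fin K) (Fin K) ℂ) : Matrix (Fin K) (Fin K) ℂ :=
  Matrix.of fun ℓ k => psi K k B ℓ

/-- The `K`-dimensional DFT matrix (0-based indices): `F_{n,m} = e^{-2πi·n·m/K}`. -/
noncomputable def dft (K : ℕ) : Matrix (Fin K) (Fin K) ℂ :=
  Matrix.of fun n m : Fin K =>
    Complex.exp (-(2 * (Real.pi : ℂ) * Complex.I * ((n : ℕ) : ℂ) * ((m : ℕ) : ℂ)) / (K : ℂ))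

/-- The zero-padded, time-shifted pilot `p(t) ∈ ℂ^{L+D}` (0-based): entry `k` equals
`p_{k-t}` when `t ≤ k < t + L` and `0` otherwise. -/
def shiftPad (L D : ℕ) (p : Fin L → ℂ) (t : ℕ) : Fin (L + D) → ℂ :=
  fun k => if h : t ≤ (k : ℕ) ∧ (k : ℕ) - t < L then p ⟨(k : ℕ) - t, h.2⟩ else 0


lemma sumRootsAux (P : ℕ) (hP : 0 < P) (d : ℤ) :
    ∑ n : Fin P, Complex.exp (2 * Real.pi * Complex.I * d * n / P) =
      if (P:ℤ) ∣ d then (P:ℂ) else 0 := by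
  have hP' : (P:ℂ) ≠ 0 := Nat.cast_ne_zero.2 hP.ne'
  set ζ : ℂ := Complex.exp (2 * Real.pi * Complex.I * d / P) with hζ
  have hterm : ∀ n : Fin P, Complex.exp (2 * Real.pi * Complex.I * d * n / P) = ζ ^ (n:ℕ) := by
    intro n
    rw [hζ, ← Complex.exp_nat_mul]
    ring_nf
  simp only [hterm]
  rw [Fin.sum_univ_eq_sum_range (fun i => ζ ^ i)]
  by_cases hdvd : (P:ℤ) ∣ d
  · rcases hdvd with ⟨c, hc⟩
    have hζ1 : ζ = 1 := by
      rw [hζ, hc]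
      push_cast
      rw [show 2 * (Real.pi:ℂ) * Complex.I * ((P:ℂ) * c) / P = c * (2 * Real.pi * Complex.I) by
        field_simp]
      exact Complex.exp_int_mul_two_pi_mul_I c
    rw [if_pos ⟨c, hc⟩]
    simp [hζ1]
  · have hne : (2 * (Real.pi:ℂ) * Complex.I) ≠ 0 := by
      simp [Real.pi_ne_zero, Complex.I_ne_zero]
    have hζ1 : ζ ≠ 1 := by
      intro h
      rw [hζ, Complex.exp_eq_one_iff] at h
      obtain ⟨k, hk⟩ := h
      rw [div_eq_iff hP'] at hk
      have h4 : (2 * (Real.pi:ℂ) * Complex.I) * (d:ℂ) = (2 * Real.pi * Complex.I) * ((k:ℂ) * P) := by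
        linear_combination hk
      have h5 : (d:ℂ) = (k:ℂ) * P := mul_left_cancel₀ hne h4
      have h6 : d = k * (P:ℤ) := by exact_mod_cast h5
      exact hdvd ⟨k, by rw [h6]; ring⟩
    rw [geom_sum_eq hζ1]
    have hζP : ζ ^ P = 1 := by
      rw [hζ, ← Complex.exp_nat_mul]
      rw [show (P:ℂ) * (2 * Real.pi * Complex.I * d / P) = d * (2 * Real.pi * Complex.I) by
        field_simp]
      exact Complex.exp_int_mul_two_pi_mul_I d
    simp [hζP, hdvd]

lemma dft_triple (K : ℕ) (hK : 0 < K) (t a m n : Fin K) :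
    dft K t n * (star (dft K a n)) * dft K n m =
      Complex.exp (2 * Real.pi * Complex.I *
        (((((a:ℕ):ℤ) - ((m:ℕ):ℤ) - ((t:ℕ):ℤ)) : ℤ) : ℂ) * n / K) := by
  have hK' : (K:ℂ) ≠ 0 := Nat.cast_ne_zero.2 hK.ne'
  simp only [RCLike.star_def]
  simp only [dft, Matrix.of_apply, ← Complex.exp_conj, ← Complex.exp_add]
  congr 1
  simp only [map_div₀, map_neg, _root_.map_mul, Complex.conj_I, Complex.conj_ofReal,
    _root_.map_natCast, _root_.map_ofNat]
  push_cast
  field_simp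
  ring

lemma entry_formula (K : ℕ) (hK : 0 < K) (A B : Matrix (Fin K) (Fin K) ℂ) (t : Fin K)
    (hB : ∀ m : Fin K, K ≤ (m:ℕ) + (t:ℕ) → ∀ ℓ, B m ℓ = 0) (ℓ : Fin K) :
    (dft K * Matrix.hadamard ((dft K)ᴴ * A) (dft K * B)) t ℓ =
      (K:ℂ) * ∑ m : Fin K,
        (if h : (m:ℕ) + (t:ℕ) < K then A ⟨(m:ℕ)+(t:ℕ), h⟩ ℓ * B m ℓ else 0) := by
  have step1 : (dft K * Matrix.hadamard ((dft K)ᴴ * A) (dft K * B)) t ℓ =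
      ∑ m : Fin K, ∑ a : Fin K, (A a ℓ * B m ℓ) *
        ∑ n : Fin K,
          Complex.exp (2 * Real.pi * Complex.I * (((((a:ℕ):ℤ) - ((m:ℕ):ℤ) - ((t:ℕ):ℤ)) : ℤ) : ℂ) * n / K) := by
    simp only [Matrix.mul_apply, Matrix.hadamard_apply, Matrix.conjTranspose_apply,
      Finset.sum_mul, Finset.mul_sum]
    rw [Finset.sum_comm]
    refine Finset.sum_congr rfl fun m _ => ?_
    rw [Finset.sum_comm]
    refine Finset.sum_congr rfl fun a _ => Finset.sum_congr rfl fun n _ => ?_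
    rw [← dft_triple K hK t a m n]
    ring
  rw [step1, Finset.mul_sum]
  refine Finset.sum_congr rfl fun m _ => ?_
  simp only [sumRootsAux K hK]
  by_cases h : (m:ℕ) + (t:ℕ) < K
  · rw [dif_pos h]
    rw [Finset.sum_eq_single (⟨(m:ℕ)+(t:ℕ), h⟩ : Fin K)]
    · rw [if_pos (by simp)]
      ring
    · intro a _ ha
      rw [if_neg, mul_zero]
      intro ⟨c, hc⟩
      have hc1 : ((a:ℕ):ℤ) - (m:ℕ) - (t:ℕ) = K * c := hc
      have hb1 : -(K:ℤ) < (K:ℤ) * c := by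
        have : ((a:ℕ):ℤ) ≥ 0 := Int.ofNat_nonneg _
        omega
      have hb2 : (K:ℤ) * c < K := by
        have : ((a:ℕ):ℤ) < K := by exact_mod_cast a.isLt
        omega
      have hc0 : c = 0 := by
        rcases lt_trichotomy c 0 with h1 | h1 | h1
        · nlinarith [hb1]
        · exact h1
        · nlinarith [hb2]
      apply ha
      apply Fin.ext
      simp only [hc0, mul_zero] at hc1
      simp only [Fin.val_mk]
      omega
    · simp
  · rw [dif_neg h, hB m (by omega) ℓ]
    simp

noncomputable def wgt (n : ℕ) : ℂ := if n = 0 then (1/2 : ℂ) else 1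

noncomputable def ufun (K : ℕ) (X : Matrix (Fin K) (Fin K) ℂ) (q : Fin K → ℂ) (ω : ℝ)
    (k l : Fin K) : ℂ :=
  if (k:ℕ) ≤ (l:ℕ) then
    wgt ((l:ℕ) - (k:ℕ)) * (starRingEnd ℂ) (q k) * X k l * q l *
      Complex.exp (Complex.I * ((((l:ℕ) - (k:ℕ) : ℕ)) : ℂ) * (ω:ℂ))
  else 0

noncomputable def gfun (K : ℕ) (X : Matrix (Fin K) (Fin K) ℂ) (q : Fin K → ℂ) (ω : ℝ)
    (t : ℕ) (ht : t < K) (ℓ m : Fin K) : ℂ :=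
  if h : (m:ℕ) + t + (ℓ:ℕ) < K then
    wgt (ℓ:ℕ) * (starRingEnd ℂ) (q ⟨(m:ℕ)+t, by omega⟩) *
      X ⟨(m:ℕ)+t, by omega⟩ ⟨(m:ℕ)+t+(ℓ:ℕ), h⟩ * q ⟨(m:ℕ)+t+(ℓ:ℕ), h⟩ *
      Complex.exp (Complex.I * (((ℓ:ℕ)) : ℂ) * (ω:ℂ))
  else 0

lemma mul_rearrange (a x s y e w : ℂ) (h : a * a = w) :
    a * x * (a * (s * y)) * e = w * s * x * y * e := by
  linear_combination (x * s * y * e) * h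

lemma conj_exp_aux (n : ℕ) (ω : ℝ) :
    (starRingEnd ℂ) (Complex.exp (Complex.I * (n:ℂ) * (ω:ℂ))) =
      Complex.exp (-(Complex.I * (n:ℂ) * (ω:ℂ))) := by
  rw [← Complex.exp_conj]
  congr 1
  simp [_root_.map_mul, Complex.conj_I, Complex.conj_ofReal]

lemma exp_mul_aux (a b : ℕ) (h : a ≤ b) (ω : ℝ) :
    Complex.exp (-(Complex.I * (a:ℂ) * (ω:ℂ))) * Complex.exp (Complex.I * (b:ℂ) * (ω:ℂ)) =
      Complex.exp (Complex.I * (((b - a : ℕ)) : ℂ) * (ω:ℂ)) := by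
  rw [← Complex.exp_add]
  congr 1
  push_cast [Nat.cast_sub h]
  ring

lemma exp_mul_aux' (a b : ℕ) (h : b ≤ a) (ω : ℝ) :
    Complex.exp (-(Complex.I * (a:ℂ) * (ω:ℂ))) * Complex.exp (Complex.I * (b:ℂ) * (ω:ℂ)) =
      Complex.exp (-(Complex.I * (((a - b : ℕ)) : ℂ) * (ω:ℂ))) := by
  rw [← Complex.exp_add]
  congr 1
  push_cast [Nat.cast_sub h]
  ring

open Finset in
lemma reindex_lemma (K : ℕ) (X : Matrix (Fin K) (Fin K) ℂ) (q : Fin K → ℂ) (ω : ℝ)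
    (t : ℕ) (ht : t < K) (hq : ∀ k : Fin K, (k:ℕ) < t → q k = 0) :
    ∑ ℓ : Fin K, ∑ m : Fin K, gfun K X q ω t ht ℓ m =
      ∑ k : Fin K, ∑ l : Fin K, ufun K X q ω k l := by
  have hK : 0 < K := by omega
  rw [← Finset.sum_product' (s := univ) (t := univ)
      (f := fun ℓ m => gfun K X q ω t ht ℓ m),
    ← Finset.sum_product' (s := univ) (t := univ) (f := fun k l => ufun K X q ω k l)]
  have hgL : ∑ x ∈ univ ×ˢ univ, gfun K X q ω t ht x.1 x.2 =
      ∑ x ∈ (univ ×ˢ univ).filter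
        (fun x : Fin K × Fin K => (x.2:ℕ) + t + (x.1:ℕ) < K), gfun K X q ω t ht x.1 x.2 := by
    refine (Finset.sum_filter_of_ne ?_).symm
    intro x _ hx
    by_contra hc
    exact hx (dif_neg hc)
  have hgR : ∑ y ∈ univ ×ˢ univ, ufun K X q ω y.1 y.2 =
      ∑ y ∈ (univ ×ˢ univ).filter
        (fun y : Fin K × Fin K => t ≤ (y.1:ℕ) ∧ (y.1:ℕ) ≤ (y.2:ℕ)), ufun K X q ω y.1 y.2 := by
    refine (Finset.sum_filter_of_ne ?_).symm
    intro y _ hy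
    by_contra hc
    apply hy
    rw [not_and_or] at hc
    by_cases h1 : (y.1:ℕ) ≤ (y.2:ℕ)
    · have h2 : (y.1:ℕ) < t := by
        rcases hc with h | h
        · omega
        · exact absurd h1 h
      simp [ufun, h1, hq y.1 h2]
    · simp [ufun, h1]
  rw [hgL, hgR]
  refine Finset.sum_nbij'
    (i := fun x => ((⟨((x.2:ℕ) + t) % K, Nat.mod_lt _ hK⟩ : Fin K),
                    (⟨((x.2:ℕ) + t + (x.1:ℕ)) % K, Nat.mod_lt _ hK⟩ : Fin K)))
    (j := fun y => ((⟨(y.2:ℕ) - (y.1:ℕ), by omega⟩ : Fin K),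
                    (⟨(y.1:ℕ) - t, by omega⟩ : Fin K)))
    ?_ ?_ ?_ ?_ ?_
  · intro x hx
    simp only [Finset.mem_filter, Finset.mem_product, Finset.mem_univ, true_and,
      and_true, Fin.val_mk] at hx ⊢
    have hm1 : ((x.2:ℕ) + t) % K = (x.2:ℕ) + t := Nat.mod_eq_of_lt (by omega)
    have hm2 : ((x.2:ℕ) + t + (x.1:ℕ)) % K = (x.2:ℕ) + t + (x.1:ℕ) :=
      Nat.mod_eq_of_lt (by omega)
    omega
  · intro y hy
    simp only [Finset.mem_filter, Finset.mem_product, Finset.mem_univ, true_and,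
      and_true, Fin.val_mk] at hy ⊢
    omega
  · intro x hx
    simp only [Finset.mem_filter, Finset.mem_product, Finset.mem_univ, true_and] at hx
    have hm1 : ((x.2:ℕ) + t) % K = (x.2:ℕ) + t := Nat.mod_eq_of_lt (by omega)
    have hm2 : ((x.2:ℕ) + t + (x.1:ℕ)) % K = (x.2:ℕ) + t + (x.1:ℕ) :=
      Nat.mod_eq_of_lt (by omega)
    have h1 : (x.1, x.2) = x := rfl
    rw [← h1]
    simp only [Prod.mk.injEq]
    refine ⟨Fin.ext ?_, Fin.ext ?_⟩ <;> simp only [Fin.val_mk] <;> omega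
  · intro y hy
    simp only [Finset.mem_filter, Finset.mem_product, Finset.mem_univ, true_and] at hy
    have hm1 : ((y.1:ℕ) - t + t) % K = (y.1:ℕ) - t + t := Nat.mod_eq_of_lt (by omega)
    have hm2 : ((y.1:ℕ) - t + t + ((y.2:ℕ) - (y.1:ℕ))) % K =
        (y.1:ℕ) - t + t + ((y.2:ℕ) - (y.1:ℕ)) := Nat.mod_eq_of_lt (by omega)
    have h1 : (y.1, y.2) = y := rfl
    rw [← h1]
    simp only [Prod.mk.injEq]
    refine ⟨Fin.ext ?_, Fin.ext ?_⟩ <;> simp only [Fin.val_mk] <;> omega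
  · intro x hx
    simp only [Finset.mem_filter, Finset.mem_product, Finset.mem_univ, true_and] at hx
    have hm1 : ((x.2:ℕ) + t) % K = (x.2:ℕ) + t := Nat.mod_eq_of_lt (by omega)
    have hm2 : ((x.2:ℕ) + t + (x.1:ℕ)) % K = (x.2:ℕ) + t + (x.1:ℕ) :=
      Nat.mod_eq_of_lt (by omega)
    simp only [gfun, ufun, Fin.val_mk]
    rw [dif_pos hx]
    have f1 : (⟨((x.2:ℕ) + t) % K, Nat.mod_lt _ hK⟩ : Fin K) =
        ⟨(x.2:ℕ) + t, by omega⟩ := Fin.ext (by simp only [Fin.val_mk]; omega)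
    have f2 : (⟨((x.2:ℕ) + t + (x.1:ℕ)) % K, Nat.mod_lt _ hK⟩ : Fin K) =
        ⟨(x.2:ℕ) + t + (x.1:ℕ), hx⟩ := Fin.ext (by simp only [Fin.val_mk]; omega)
    rw [f1, f2]
    have hcond : ((x.2:ℕ) + t) % K ≤ ((x.2:ℕ) + t + (x.1:ℕ)) % K := by omega
    rw [if_pos hcond]
    have e1 : ((x.2:ℕ) + t + (x.1:ℕ)) % K - ((x.2:ℕ) + t) % K = (x.1:ℕ) := by omega
    rw [e1]

lemma term_split (K : ℕ) (X : Matrix (Fin K) (Fin K) ℂ) (hX : X.IsHermitian)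
    (q : Fin K → ℂ) (ω : ℝ) (k l : Fin K) :
    (starRingEnd ℂ) (Complex.exp (Complex.I * ((k:ℕ):ℂ) * (ω:ℂ)) * q k) *
        (X k l * (Complex.exp (Complex.I * ((l:ℕ):ℂ) * (ω:ℂ)) * q l)) =
      ufun K X q ω k l + (starRingEnd ℂ) (ufun K X q ω l k) := by
  have hherm : ∀ a b : Fin K, (starRingEnd ℂ) (X a b) = X b a := by
    intro a b
    conv_rhs => rw [show X = Xᴴ from hX.symm]
    rw [Matrix.conjTranspose_apply]
    rfl
  rw [_root_.map_mul, conj_exp_aux]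
  rcases lt_trichotomy (k:ℕ) (l:ℕ) with h | h | h
  · simp only [ufun]
    rw [if_pos h.le, if_neg (show ¬((l:ℕ) ≤ (k:ℕ)) by omega), map_zero, add_zero]
    have hw : wgt ((l:ℕ) - (k:ℕ)) = 1 := by rw [wgt, if_neg (by omega)]
    rw [hw, ← exp_mul_aux k l h.le ω]
    ring
  · have hkl : k = l := Fin.ext h
    subst hkl
    simp only [ufun]
    rw [if_pos (le_refl (k:ℕ))]
    have hw : wgt ((k:ℕ) - (k:ℕ)) = 1/2 := by rw [wgt, if_pos (by omega)]
    have he : Complex.exp (Complex.I * ((((k:ℕ) - (k:ℕ) : ℕ)) : ℂ) * (ω:ℂ)) = 1 := by simp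
    have he2 : Complex.exp (-(Complex.I * ((k:ℕ):ℂ) * (ω:ℂ))) *
        Complex.exp (Complex.I * ((k:ℕ):ℂ) * (ω:ℂ)) = 1 := by
      rw [← Complex.exp_add]; simp
    rw [hw, he, mul_one]
    have hconjpart : (starRingEnd ℂ) (1 / 2 * (starRingEnd ℂ) (q k) * X k k * q k) =
        1 / 2 * q k * X k k * (starRingEnd ℂ) (q k) := by
      simp only [_root_.map_mul, Complex.conj_conj, map_div₀, _root_.map_one, _root_.map_ofNat]
      rw [hherm k k]
    rw [hconjpart]
    linear_combination ((starRingEnd ℂ) (q k) * X k k * q k) * he2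
  · simp only [ufun]
    rw [if_neg (show ¬((k:ℕ) ≤ (l:ℕ)) by omega), if_pos h.le, zero_add]
    have hw : wgt ((k:ℕ) - (l:ℕ)) = 1 := by rw [wgt, if_neg (by omega)]
    rw [hw]
    simp only [_root_.map_mul, _root_.map_one, Complex.conj_conj]
    rw [hherm l k, conj_exp_aux ((k:ℕ) - (l:ℕ)) ω]
    rw [← exp_mul_aux' (k:ℕ) (l:ℕ) h.le ω]
    ring

theorem stmt_14 (L D : ℕ) (hL : 1 ≤ L)
    (X : Matrix (Fin (L + D)) (Fin (L + D)) ℂ) (hX : X.IsHermitian)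
    (p : Fin L → ℂ) (t : ℕ) (ht : t ≤ D) (ω : ℝ) :
    star (fun k : Fin (L + D) =>
          Complex.exp (Complex.I * ((k : ℕ) : ℂ) * (ω : ℂ)) * shiftPad L D p t k) ⬝ᵥ
        X *ᵥ (fun k : Fin (L + D) =>
          Complex.exp (Complex.I * ((k : ℕ) : ℂ) * (ω : ℂ)) * shiftPad L D p t k)
      = (((2 / ((L + D : ℕ) : ℝ)) *
          (∑ ℓ : Fin (L + D),
            (dft (L + D) *
                Matrix.hadamard ((dft (L + D))ᴴ * bigPsi (L + D) X)
                  (dft (L + D) *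
                    bigPsi (L + D) (vecMulVec (star (shiftPad L D p 0)) (shiftPad L D p 0))))
              ⟨t, by omega⟩ ℓ *
              Complex.exp (Complex.I * ((ℓ : ℕ) : ℂ) * (ω : ℂ))).re : ℝ) : ℂ) := by
  have hK : 0 < L + D := by omega
  have htK : t < L + D := by omega
  have hq0zero : ∀ m : Fin (L + D), L ≤ (m:ℕ) → shiftPad L D p 0 m = 0 := by
    intro m hm
    simp only [shiftPad]
    rw [dif_neg]
    omega
  have hqzero : ∀ k : Fin (L + D), (k:ℕ) < t → shiftPad L D p t k = 0 := by
    intro k hk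
    simp only [shiftPad]
    rw [dif_neg]
    omega
  have hB0 : ∀ m : Fin (L + D), (L + D) ≤ (m:ℕ) + t → ∀ ℓ,
      bigPsi (L + D) (vecMulVec (star (shiftPad L D p 0)) (shiftPad L D p 0)) m ℓ = 0 := by
    intro m hm ℓ
    simp only [bigPsi, Matrix.of_apply, psi]
    by_cases h : (m:ℕ) + (ℓ:ℕ) < L + D
    · rw [dif_pos h, Matrix.vecMulVec_apply, Pi.star_apply, hq0zero m (by omega)]
      simp
    · rw [dif_neg h]
  have hterm : ∀ (ℓ m : Fin (L + D)),
      (if h : (m:ℕ) + t < L + D then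
          bigPsi (L + D) X ⟨(m:ℕ)+t, h⟩ ℓ *
            bigPsi (L + D) (vecMulVec (star (shiftPad L D p 0)) (shiftPad L D p 0)) m ℓ
        else 0) *
          Complex.exp (Complex.I * ((ℓ:ℕ):ℂ) * (ω:ℂ)) =
        gfun (L + D) X (shiftPad L D p t) ω t htK ℓ m := by
    intro ℓ m
    by_cases h2 : (m:ℕ) + t + (ℓ:ℕ) < L + D
    · have h1 : (m:ℕ) + t < L + D := by omega
      have h3 : (m:ℕ) + (ℓ:ℕ) < L + D := by omega
      rw [dif_pos h1]
      simp only [gfun, bigPsi, Matrix.of_apply, psi, Matrix.vecMulVec_apply, Pi.star_apply,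
        Fin.val_mk]
      rw [dif_pos (show (m:ℕ) + t + (ℓ:ℕ) < L + D from h2), dif_pos h3, dif_pos h2]
      have e1 : shiftPad L D p 0 m = shiftPad L D p t ⟨(m:ℕ) + t, h1⟩ := by
        simp only [shiftPad, Fin.val_mk]
        by_cases hm : (m:ℕ) < L
        · rw [dif_pos ⟨by omega, by omega⟩, dif_pos ⟨by omega, by omega⟩]
          congr 1
          exact Fin.ext (by simp only [Fin.val_mk]; omega)
        · rw [dif_neg (by omega), dif_neg (by omega)]
      have e2 : shiftPad L D p 0 ⟨(m:ℕ) + (ℓ:ℕ), h3⟩ =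
          shiftPad L D p t ⟨(m:ℕ) + t + (ℓ:ℕ), h2⟩ := by
        simp only [shiftPad, Fin.val_mk]
        by_cases hm : (m:ℕ) + (ℓ:ℕ) < L
        · rw [dif_pos ⟨by omega, by omega⟩, dif_pos ⟨by omega, by omega⟩]
          congr 1
          exact Fin.ext (by simp only [Fin.val_mk]; omega)
        · rw [dif_neg (by omega), dif_neg (by omega)]
      rw [e1, e2]
      by_cases hℓ : (ℓ:ℕ) = 0
      · rw [if_pos hℓ, wgt, if_pos hℓ]
        have hsqr : (Real.sqrt 2 / 2) * (Real.sqrt 2 / 2) = (1:ℝ)/2 := by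
          rw [div_mul_div_comm, Real.mul_self_sqrt (by norm_num)]
          norm_num
        have hsq : ((Real.sqrt 2 / 2 : ℝ) : ℂ) * ((Real.sqrt 2 / 2 : ℝ) : ℂ) = 1/2 := by
          rw [← Complex.ofReal_mul, hsqr]
          push_cast
          ring
        exact mul_rearrange _ _ _ _ _ _ hsq
      · rw [if_neg hℓ, wgt, if_neg hℓ]
        exact mul_rearrange _ _ _ _ _ _ (by norm_num)
    · by_cases h1 : (m:ℕ) + t < L + D
      · rw [dif_pos h1]
        simp only [gfun, bigPsi, Matrix.of_apply, psi, Fin.val_mk]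
        rw [dif_neg (show ¬((m:ℕ) + t + (ℓ:ℕ) < L + D) from h2),
          dif_neg (show ¬((m:ℕ) + t + (ℓ:ℕ) < L + D) from h2)]
        simp
      · rw [dif_neg h1]
        simp only [gfun]
        rw [dif_neg (show ¬((m:ℕ) + t + (ℓ:ℕ) < L + D) from h2)]
        simp
  have hsum : ∑ ℓ : Fin (L + D),
      (dft (L + D) *
          Matrix.hadamard ((dft (L + D))ᴴ * bigPsi (L + D) X)
            (dft (L + D) *
              bigPsi (L + D) (vecMulVec (star (shiftPad L D p 0)) (shiftPad L D p 0))))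
          ⟨t, htK⟩ ℓ *
        Complex.exp (Complex.I * ((ℓ:ℕ):ℂ) * (ω:ℂ))
      = ((L + D : ℕ):ℂ) *
          ∑ k : Fin (L + D), ∑ l : Fin (L + D), ufun (L + D) X (shiftPad L D p t) ω k l := by
    rw [← reindex_lemma (L + D) X (shiftPad L D p t) ω t htK hqzero, Finset.mul_sum]
    refine Finset.sum_congr rfl fun ℓ _ => ?_
    rw [entry_formula (L + D) hK _ _ ⟨t, htK⟩ hB0 ℓ, mul_assoc]
    congr 1
    rw [Finset.sum_mul]
    exact Finset.sum_congr rfl fun m _ => hterm ℓ m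
  have hLHS : star (fun k : Fin (L + D) =>
          Complex.exp (Complex.I * ((k : ℕ) : ℂ) * (ω : ℂ)) * shiftPad L D p t k) ⬝ᵥ
        X *ᵥ (fun k : Fin (L + D) =>
          Complex.exp (Complex.I * ((k : ℕ) : ℂ) * (ω : ℂ)) * shiftPad L D p t k)
      = (∑ k : Fin (L + D), ∑ l : Fin (L + D), ufun (L + D) X (shiftPad L D p t) ω k l) +
        (starRingEnd ℂ)
          (∑ k : Fin (L + D), ∑ l : Fin (L + D), ufun (L + D) X (shiftPad L D p t) ω k l) := by
    have expand : star (fun k : Fin (L + D) =>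
          Complex.exp (Complex.I * ((k : ℕ) : ℂ) * (ω : ℂ)) * shiftPad L D p t k) ⬝ᵥ
        X *ᵥ (fun k : Fin (L + D) =>
          Complex.exp (Complex.I * ((k : ℕ) : ℂ) * (ω : ℂ)) * shiftPad L D p t k)
        = ∑ k : Fin (L + D), ∑ l : Fin (L + D),
            (starRingEnd ℂ) (Complex.exp (Complex.I * ((k:ℕ):ℂ) * (ω:ℂ)) * shiftPad L D p t k) *
              (X k l * (Complex.exp (Complex.I * ((l:ℕ):ℂ) * (ω:ℂ)) * shiftPad L D p t l)) := by
      simp only [dotProduct, Matrix.mulVec, Pi.star_apply, RCLike.star_def,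
        Finset.mul_sum]
    rw [expand]
    have step : ∀ k l : Fin (L + D),
        (starRingEnd ℂ) (Complex.exp (Complex.I * ((k:ℕ):ℂ) * (ω:ℂ)) * shiftPad L D p t k) *
            (X k l * (Complex.exp (Complex.I * ((l:ℕ):ℂ) * (ω:ℂ)) * shiftPad L D p t l))
          = ufun (L + D) X (shiftPad L D p t) ω k l +
            (starRingEnd ℂ) (ufun (L + D) X (shiftPad L D p t) ω l k) :=
      fun k l => term_split (L + D) X hX (shiftPad L D p t) ω k l
    calc ∑ k : Fin (L + D), ∑ l : Fin (L + D),
          (starRingEnd ℂ) (Complex.exp (Complex.I * ((k:ℕ):ℂ) * (ω:ℂ)) * shiftPad L D p t k) *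
            (X k l * (Complex.exp (Complex.I * ((l:ℕ):ℂ) * (ω:ℂ)) * shiftPad L D p t l))
        = ∑ k : Fin (L + D), ∑ l : Fin (L + D),
            (ufun (L + D) X (shiftPad L D p t) ω k l +
              (starRingEnd ℂ) (ufun (L + D) X (shiftPad L D p t) ω l k)) :=
          Finset.sum_congr rfl fun k _ => Finset.sum_congr rfl fun l _ => step k l
      _ = (∑ k : Fin (L + D), ∑ l : Fin (L + D), ufun (L + D) X (shiftPad L D p t) ω k l) +
            ∑ k : Fin (L + D), ∑ l : Fin (L + D),
              (starRingEnd ℂ) (ufun (L + D) X (shiftPad L D p t) ω l k) := by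
          simp [Finset.sum_add_distrib]
      _ = (∑ k : Fin (L + D), ∑ l : Fin (L + D), ufun (L + D) X (shiftPad L D p t) ω k l) +
            (starRingEnd ℂ)
              (∑ k : Fin (L + D), ∑ l : Fin (L + D), ufun (L + D) X (shiftPad L D p t) ω k l) := by
          congr 1
          rw [Finset.sum_comm]
          simp [map_sum]
  rw [hLHS, hsum]
  set U : ℂ := ∑ k : Fin (L + D), ∑ l : Fin (L + D), ufun (L + D) X (shiftPad L D p t) ω k l
    with hUdef
  have hre : ((((L + D : ℕ):ℂ) * U).re : ℝ) = ((L + D : ℕ):ℝ) * U.re := by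
    simp [Complex.mul_re]
  rw [hre]
  have harith : (2 / ((L + D : ℕ):ℝ)) * (((L + D : ℕ):ℝ) * U.re) = 2 * U.re := by
    have : ((L + D : ℕ):ℝ) ≠ 0 := Nat.cast_ne_zero.2 hK.ne'
    field_simp
  rw [harith]
  push_cast
  rw [Complex.add_conj]
  push_cast
  ring
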